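/- arXiv:2509.05036 — 2 statements merged into one kernel-verified Lean document; each statement's English description precedes it below -/
import Mathlib

section
/- No-input embezzlement implies standard embezzlement (Proposition 2.1, backward direction). Let H be a complex Hilbert space, let ψ ∈ ℂ² ⊗ ℂ² and φ_c ∈ H be unit vectors, and let V_A, V_B : H → H ⊗ ℂ² be linear isometries such that (V_A ⊗ 1₂)(V_B φ_c) = φ_c ⊗ ψ, where the two output qubit factors are ordered so that the qubit produced by V_A comes first, and such that (V_A ⊗ 1₂) V_B = S ∘ (V_B ⊗ 1₂) V_A, where S is the unitary on H ⊗ ℂ² ⊗ ℂ² swapping the two qubit factors. Then, with catalyst space H' := H ⊗ ℂ^∞ ⊗ ℂ^∞ and catalyst vector ψ_c := φ_c ⊗ Ω ⊗ Ω, there exist linear isometries U_A, U_B : H' ⊗ ℂ² → H' ⊗ ℂ² whose amplifications Ū_A, Ū_B on H' ⊗ ℂ² ⊗ ℂ² (Ū_A applying U_A to H' and the first qubit, Ū_B applying U_B to H' and the second qubit) satisfy Ū_A Ū_B = Ū_B Ū_A and Ū_A Ū_B (ψ_c ⊗ |00⟩) = ψ_c ⊗ ψ. -/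
noncomputable section

variable {K : Type*} [NormedAddCommGroup K] [InnerProductSpace ℂ K]

/-- `K ⊗ ℂ²`, realized concretely as the Hilbert space of `K`-valued families indexed by the
qubit basis `{|0⟩, |1⟩}`. -/
abbrev QTensor (K : Type*) [NormedAddCommGroup K] [InnerProductSpace ℂ K] :=
  PiLp 2 (fun _ : Fin 2 => K)

/-- `K ⊗ ℂ² ⊗ ℂ²`, realized concretely and indexed by pairs `(i, j)`, where `i` labels the basis
of the first qubit factor and `j` that of the second. -/
abbrev QQTensor (K : Type*) [NormedAddCommGroup K] [InnerProductSpace ℂ K] :=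
  PiLp 2 (fun _ : Fin 2 × Fin 2 => K)

/-- The elementary tensor `h ⊗ v` of a vector `h : K` with a two-qubit vector
`v ∈ ℂ² ⊗ ℂ²`, as an element of `K ⊗ ℂ² ⊗ ℂ²`. -/
def vecTensor (h : K) (v : EuclideanSpace ℂ (Fin 2 × Fin 2)) : QQTensor K :=
  WithLp.toLp 2 (fun p => v p • h)

/-- The qubit basis state `|0⟩ ∈ ℂ²`. -/
def ket0 : EuclideanSpace ℂ (Fin 2) := EuclideanSpace.single 0 1

/-- The elementary tensor `u ⊗ v ∈ ℂ² ⊗ ℂ²` of two qubit states. -/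
def qubitTensor (u v : EuclideanSpace ℂ (Fin 2)) : EuclideanSpace ℂ (Fin 2 × Fin 2) :=
  WithLp.toLp 2 (fun p => u p.1 * v p.2)

/-- The state `|00⟩ = |0⟩ ⊗ |0⟩ ∈ ℂ² ⊗ ℂ²`. -/
def ket00 : EuclideanSpace ℂ (Fin 2 × Fin 2) := qubitTensor ket0 ket0

/-- The amplification `U ⊗ 1₂` of a linear isometry `U` of `K ⊗ ℂ²`, acting on `K` and the
*first* qubit factor of `K ⊗ ℂ² ⊗ ℂ²` and as the identity on the second qubit factor. -/
def ampFirst (U : QTensor K →ₗᵢ[ℂ] QTensor K) : QQTensor K →ₗᵢ[ℂ] QQTensor K :=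
  LinearMap.isometryOfInner
    { toFun := fun x => WithLp.toLp 2 (fun p => U (WithLp.toLp 2 (fun i' => x (i', p.2))) p.1)
      map_add' := fun x y => by
        ext p
        have : WithLp.toLp 2 (fun i' => (x + y) (i', p.2)) =
            WithLp.toLp 2 (fun i' => x (i', p.2)) + WithLp.toLp 2 (fun i' => y (i', p.2)) := rfl
        simp only [this, map_add]
        rfl
      map_smul' := fun c x => by
        ext p
        have : WithLp.toLp 2 (fun i' => (c • x) (i', p.2)) =
            c • WithLp.toLp 2 (fun i' => x (i', p.2)) := rfl
        simp only [this, map_smul]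
        rfl }
    (by
      intro x y
      simp only [PiLp.inner_apply, LinearMap.coe_mk, AddHom.coe_mk]
      have key : ∀ j : Fin 2,
          (∑ i : Fin 2, (inner ℂ (U (WithLp.toLp 2 (fun i' => x (i', j))) i)
              (U (WithLp.toLp 2 (fun i' => y (i', j))) i) : ℂ))
            = ∑ i : Fin 2, (inner ℂ (x (i, j)) (y (i, j)) : ℂ) := by
        intro j
        have h := U.inner_map_map (WithLp.toLp 2 (fun i' => x (i', j)))
          (WithLp.toLp 2 (fun i' => y (i', j)))
        rw [PiLp.inner_apply, PiLp.inner_apply] at h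
        exact h
      simp only [Fintype.sum_prod_type]
      rw [Finset.sum_comm]
      conv_rhs => rw [Finset.sum_comm]
      exact Finset.sum_congr rfl fun j _ => key j)

/-- The amplification `U ⊗ 1₂` of a linear isometry `U` of `K ⊗ ℂ²`, acting on `K` and the
*second* qubit factor of `K ⊗ ℂ² ⊗ ℂ²` and as the identity on the first qubit factor. -/
def ampSecond (U : QTensor K →ₗᵢ[ℂ] QTensor K) : QQTensor K →ₗᵢ[ℂ] QQTensor K :=
  LinearMap.isometryOfInner
    { toFun := fun x => WithLp.toLp 2 (fun p => U (WithLp.toLp 2 (fun j' => x (p.1, j'))) p.2)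
      map_add' := fun x y => by
        ext p
        have : WithLp.toLp 2 (fun j' => (x + y) (p.1, j')) =
            WithLp.toLp 2 (fun j' => x (p.1, j')) + WithLp.toLp 2 (fun j' => y (p.1, j')) := rfl
        simp only [this, map_add]
        rfl
      map_smul' := fun c x => by
        ext p
        have : WithLp.toLp 2 (fun j' => (c • x) (p.1, j')) =
            c • WithLp.toLp 2 (fun j' => x (p.1, j')) := rfl
        simp only [this, map_smul]
        rfl }
    (by
      intro x y
      simp only [PiLp.inner_apply, LinearMap.coe_mk, AddHom.coe_mk]
      have key : ∀ i : Fin 2,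
          (∑ j : Fin 2, (inner ℂ (U (WithLp.toLp 2 (fun j' => x (i, j'))) j)
              (U (WithLp.toLp 2 (fun j' => y (i, j'))) j) : ℂ))
            = ∑ j : Fin 2, (inner ℂ (x (i, j)) (y (i, j)) : ℂ) := by
        intro i
        have h := U.inner_map_map (WithLp.toLp 2 (fun j' => x (i, j')))
          (WithLp.toLp 2 (fun j' => y (i, j')))
        rw [PiLp.inner_apply, PiLp.inner_apply] at h
        exact h
      simp only [Fintype.sum_prod_type]
      exact Finset.sum_congr rfl fun i _ => key i)

/-- The amplification `V ⊗ 1₂` of a linear isometry `V : K → K ⊗ ℂ²`, acting on the `K` factor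
of `K ⊗ ℂ²` and as the identity on the existing qubit.  The *new* qubit produced by `V` is
placed first, the existing qubit second. -/
def ampNew (V : K →ₗᵢ[ℂ] QTensor K) : QTensor K →ₗᵢ[ℂ] QQTensor K :=
  LinearMap.isometryOfInner
    { toFun := fun x => WithLp.toLp 2 (fun p => V (x p.2) p.1)
      map_add' := fun x y => by
        ext p
        have : (x + y) p.2 = x p.2 + y p.2 := rfl
        simp only [this, map_add]
        rfl
      map_smul' := fun c x => by
        ext p
        have : (c • x) p.2 = c • x p.2 := rfl
        simp only [this, map_smul]
        rfl }
    (by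
      intro x y
      simp only [PiLp.inner_apply, LinearMap.coe_mk, AddHom.coe_mk]
      have key : ∀ j : Fin 2,
          (∑ i : Fin 2, (inner ℂ (V (x j) i) (V (y j) i) : ℂ)) = inner ℂ (x j) (y j) := by
        intro j
        have h := V.inner_map_map (x j) (y j)
        rw [PiLp.inner_apply] at h
        exact h
      simp only [Fintype.sum_prod_type]
      rw [Finset.sum_comm]
      exact Finset.sum_congr rfl fun j _ => key j)

/-- The unitary `S` on `K ⊗ ℂ² ⊗ ℂ²` swapping the two qubit factors. -/
def swapQubits : QQTensor K ≃ₗᵢ[ℂ] QQTensor K :=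
  LinearIsometryEquiv.piLpCongrLeft 2 ℂ K (Equiv.prodComm (Fin 2) (Fin 2))

/-- The index set of the standard orthonormal basis of the Guichardet infinite tensor product
`ℂ^∞ = ⊗_{n ∈ ℕ} (ℂ², |0⟩)`: finitely supported sequences `s : ℕ → {0, 1}`. -/
abbrev GuichardetIndex : Type := ℕ →₀ Fin 2

/-- The catalyst space `H ⊗ ℂ^∞ ⊗ ℂ^∞`, realized concretely as the `ℓ²`-space of `H`-valued
families indexed by pairs of finitely supported binary sequences. -/
abbrev CatalystSpace (H : Type*) [NormedAddCommGroup H] [InnerProductSpace ℂ H] :=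
  lp (fun _ : GuichardetIndex × GuichardetIndex => H) 2

/-- The catalyst vector `h ⊗ Ω ⊗ Ω ∈ H ⊗ ℂ^∞ ⊗ ℂ^∞`, where `Ω` is the reference vector of
`ℂ^∞` (the basis vector at the all-zero sequence). -/
def catalystVec {H : Type*} [NormedAddCommGroup H] [InnerProductSpace ℂ H] (h : H) :
    CatalystSpace H :=
  lp.single 2 (0, 0) h



section EmbezzleAux

open scoped ENNReal

variable {ι : Type*}

private lemma two_toReal_pos : 0 < (2 : ℝ≥0∞).toReal := by norm_num

lemma qcomp_norm_le (z : QTensor K) (b : Fin 2) : ‖z b‖ ≤ ‖z‖ := by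
  have h : ‖z‖ ^ 2 = ∑ i, ‖z i‖ ^ 2 := PiLp.norm_sq_eq_of_L2 _ z
  have h2 : ‖z b‖ ^ 2 ≤ ‖z‖ ^ 2 := by
    rw [h]
    exact Finset.single_le_sum (f := fun i : Fin 2 => ‖z i‖ ^ 2)
      (fun i _ => sq_nonneg _) (Finset.mem_univ b)
  nlinarith [norm_nonneg (z b), norm_nonneg z]

lemma memℓp_pushIn (e : ι ≃ Fin 2 × ι) (x : QTensor (lp (fun _ : ι => K) 2)) :
    Memℓp (fun k : ι => x (e k).1 ((e k).2)) 2 := by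
  apply memℓp_gen
  have hg : Summable (fun q : Fin 2 × ι => ‖x q.1 q.2‖ ^ (2 : ℝ≥0∞).toReal) := by
    rw [summable_prod_of_nonneg (fun q => Real.rpow_nonneg (norm_nonneg _) _)]
    exact ⟨fun b => (lp.memℓp (x b)).summable two_toReal_pos, Summable.of_finite⟩
  exact (Equiv.summable_iff e
    (f := fun q : Fin 2 × ι => ‖x q.1 q.2‖ ^ (2 : ℝ≥0∞).toReal)).2 hg

lemma memℓp_applyV (V : K →ₗᵢ[ℂ] QTensor K) (x : lp (fun _ : ι => K) 2) (b : Fin 2) :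
    Memℓp (fun i : ι => V (x i) b) 2 := by
  apply memℓp_gen
  refine Summable.of_nonneg_of_le (fun i => Real.rpow_nonneg (norm_nonneg _) _)
    (fun i => ?_) ((lp.memℓp x).summable two_toReal_pos)
  exact Real.rpow_le_rpow (norm_nonneg _)
    ((qcomp_norm_le (V (x i)) b).trans_eq (V.norm_map _)) ENNReal.toReal_nonneg

/-- The push-in linear map. -/
def pushInL (e : ι ≃ Fin 2 × ι) :
    QTensor (lp (fun _ : ι => K) 2) →ₗ[ℂ] lp (fun _ : ι => K) 2 where
  toFun x := ⟨fun k => x (e k).1 ((e k).2), memℓp_pushIn e x⟩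
  map_add' x y := rfl
  map_smul' c x := rfl

def applyVL (V : K →ₗᵢ[ℂ] QTensor K) :
    lp (fun _ : ι => K) 2 →ₗ[ℂ] QTensor (lp (fun _ : ι => K) 2) where
  toFun x := WithLp.toLp 2 (fun b => ⟨fun i => V (x i) b, memℓp_applyV V x b⟩)
  map_add' x y := by
    apply PiLp.ext
    intro b
    apply lp.ext
    funext i
    show V ((x + y) i) b = _
    have hxy : (x + y) i = x i + y i := rfl
    rw [hxy, map_add]
    rfl
  map_smul' c x := by
    apply PiLp.ext
    intro b
    apply lp.ext
    funext i
    show V ((c • x) i) b = _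
    have hxy : (c • x) i = c • x i := rfl
    rw [hxy, map_smul]
    rfl

end EmbezzleAux
open scoped ENNReal ComplexConjugate

section EmbezzleAux2

variable {ι : Type*}

/-- The push-in linear isometry. -/
def pushInI (e : ι ≃ Fin 2 × ι) :
    QTensor (lp (fun _ : ι => K) 2) →ₗᵢ[ℂ] lp (fun _ : ι => K) 2 :=
  LinearMap.isometryOfInner (pushInL e) (by
    intro x y
    rw [lp.inner_eq_tsum]
    have hs : Summable (fun q : Fin 2 × ι => (inner ℂ (x q.1 q.2) (y q.1 q.2) : ℂ)) :=
      (Equiv.summable_iff e).1 (lp.summable_inner (𝕜 := ℂ) (pushInL e x) (pushInL e y))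
    calc (∑' k : ι, (inner ℂ ((pushInL e x) k) ((pushInL e y) k) : ℂ))
        = ∑' q : Fin 2 × ι, (inner ℂ (x q.1 q.2) (y q.1 q.2) : ℂ) :=
          Equiv.tsum_eq e (fun q : Fin 2 × ι => (inner ℂ (x q.1 q.2) (y q.1 q.2) : ℂ))
      _ = ∑' b : Fin 2, ∑' i : ι, (inner ℂ (x b i) (y b i) : ℂ) :=
          Summable.tsum_prod' hs (fun b => lp.summable_inner (𝕜 := ℂ) (x b) (y b))
      _ = ∑ b : Fin 2, ∑' i : ι, (inner ℂ (x b i) (y b i) : ℂ) := tsum_fintype _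
      _ = ∑ b : Fin 2, (inner ℂ (x b) (y b) : ℂ) := by
          refine Finset.sum_congr rfl fun b _ => ?_
          rw [lp.inner_eq_tsum]
      _ = (inner ℂ x y : ℂ) := (PiLp.inner_apply x y).symm)

/-- Apply `V` fibrewise, extracting the produced qubit. -/
def applyVI (V : K →ₗᵢ[ℂ] QTensor K) :
    lp (fun _ : ι => K) 2 →ₗᵢ[ℂ] QTensor (lp (fun _ : ι => K) 2) :=
  LinearMap.isometryOfInner (applyVL V) (by
    intro x y
    rw [PiLp.inner_apply]
    calc (∑ b : Fin 2, (inner ℂ ((applyVL V x) b) ((applyVL V y) b) : ℂ))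
        = ∑ b : Fin 2, ∑' i : ι, (inner ℂ (V (x i) b) (V (y i) b) : ℂ) :=
          Finset.sum_congr rfl fun b _ => lp.inner_eq_tsum _ _
      _ = ∑' i : ι, ∑ b : Fin 2, (inner ℂ (V (x i) b) (V (y i) b) : ℂ) :=
          (Summable.tsum_finsetSum (fun b _ =>
            lp.summable_inner (𝕜 := ℂ) ((applyVL V x) b) ((applyVL V y) b))).symm
      _ = ∑' i : ι, (inner ℂ (V (x i)) (V (y i)) : ℂ) := by
          refine tsum_congr fun i => ?_
          rw [PiLp.inner_apply]
      _ = ∑' i : ι, (inner ℂ (x i) (y i) : ℂ) := by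
          refine tsum_congr fun i => ?_
          exact V.inner_map_map _ _
      _ = (inner ℂ x y : ℂ) := (lp.inner_eq_tsum x y).symm)

end EmbezzleAux2

section GiEquiv

noncomputable def giEquivAux : GuichardetIndex ≃ Fin 2 × GuichardetIndex := by
  classical
  letI : Encodable GuichardetIndex := Encodable.ofCountable _
  letI : Denumerable GuichardetIndex := Denumerable.ofEncodableOfInfinite _
  letI : Encodable (Fin 2 × GuichardetIndex) := Encodable.ofCountable _
  letI : Denumerable (Fin 2 × GuichardetIndex) := Denumerable.ofEncodableOfInfinite _
  exact (Denumerable.eqv _).trans (Denumerable.eqv _).symm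

/-- A bijection `ℂ^∞`-index `≃ Fin 2 × (ℂ^∞-index)` sending `0` to `(0, 0)`,
abstractly realizing the push-in unitary `W`. -/
noncomputable def giEquiv : GuichardetIndex ≃ Fin 2 × GuichardetIndex :=
  letI : DecidableEq (Fin 2 × GuichardetIndex) := Classical.decEq _
  giEquivAux.trans (Equiv.swap (giEquivAux 0) ((0 : Fin 2), (0 : GuichardetIndex)))

lemma giEquiv_zero : giEquiv 0 = ((0 : Fin 2), (0 : GuichardetIndex)) := by
  simp [giEquiv, Equiv.swap_apply_left]

lemma giEquiv_eq_zero_iff {s : GuichardetIndex} :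
    giEquiv s = ((0 : Fin 2), (0 : GuichardetIndex)) ↔ s = 0 :=
  ⟨fun h => giEquiv.injective (h.trans giEquiv_zero.symm), fun h => h ▸ giEquiv_zero⟩

/-- Pushing the qubit into the first `ℂ^∞` factor. -/
noncomputable def eA : (GuichardetIndex × GuichardetIndex) ≃
    Fin 2 × (GuichardetIndex × GuichardetIndex) where
  toFun k := ((giEquiv k.1).1, ((giEquiv k.1).2, k.2))
  invFun q := (giEquiv.symm (q.1, q.2.1), q.2.2)
  left_inv k := by simp
  right_inv q := by simp

/-- Pushing the qubit into the second `ℂ^∞` factor. -/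
noncomputable def eB : (GuichardetIndex × GuichardetIndex) ≃
    Fin 2 × (GuichardetIndex × GuichardetIndex) where
  toFun k := ((giEquiv k.2).1, (k.1, (giEquiv k.2).2))
  invFun q := (q.2.1, giEquiv.symm (q.1, q.2.2))
  left_inv k := by simp
  right_inv q := by simp

end GiEquiv

/-- **No-input embezzlement implies standard embezzlement** (backward direction of
Proposition 2.1).  If linear isometries `V_A, V_B : H → H ⊗ ℂ²` satisfy
`(V_A ⊗ 1₂)(V_B φ_c) = φ_c ⊗ ψ` (the qubit produced by `V_A` coming first) and
`(V_A ⊗ 1₂) V_B = S ∘ (V_B ⊗ 1₂) V_A` where `S` swaps the two qubits, then with catalyst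
space `H' = H ⊗ ℂ^∞ ⊗ ℂ^∞` and catalyst vector `ψ_c = φ_c ⊗ Ω ⊗ Ω` there are linear
isometries `U_A, U_B : H' ⊗ ℂ² → H' ⊗ ℂ²` whose amplifications `Ū_A, Ū_B` on
`H' ⊗ ℂ² ⊗ ℂ²` (acting on the first resp. second qubit) commute and satisfy
`Ū_A Ū_B (ψ_c ⊗ |00⟩) = ψ_c ⊗ ψ`. -/
theorem no_input_to_standard_embezzlement
    {H : Type*} [NormedAddCommGroup H] [InnerProductSpace ℂ H]
    (ψ : EuclideanSpace ℂ (Fin 2 × Fin 2)) (hψ : ‖ψ‖ = 1)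
    (φc : H) (hφc : ‖φc‖ = 1)
    (VA VB : H →ₗᵢ[ℂ] QTensor H)
    (hVemb : ampNew VA (VB φc) = vecTensor φc ψ)
    (hVswap : ∀ x : H, ampNew VA (VB x) = swapQubits (ampNew VB (VA x))) :
    ∃ UA UB : QTensor (CatalystSpace H) →ₗᵢ[ℂ] QTensor (CatalystSpace H),
      (∀ x : QQTensor (CatalystSpace H),
        ampFirst UA (ampSecond UB x) = ampSecond UB (ampFirst UA x)) ∧
      ampFirst UA (ampSecond UB (vecTensor (catalystVec φc) ket00))
        = vecTensor (catalystVec φc) ψ := by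
  classical
  refine ⟨(applyVI VA).comp (pushInI eA), (applyVI VB).comp (pushInI eB), ?_, ?_⟩
  · intro x
    apply PiLp.ext
    intro p
    apply lp.ext
    funext k
    have h := congrArg (fun z => z p) (hVswap
      (x ((giEquiv k.1).1, (giEquiv k.2).1) ((giEquiv k.1).2, (giEquiv k.2).2)))
    simp only [swapQubits, LinearIsometryEquiv.piLpCongrLeft_apply] at h
    exact h
  · apply PiLp.ext
    intro p
    apply lp.ext
    funext k
    obtain ⟨s, t⟩ := k
    have hsmul : ∀ (c : ℂ) (j : GuichardetIndex × GuichardetIndex),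
        (c • catalystVec φc : CatalystSpace H) j
          = c • ((catalystVec φc : CatalystSpace H) j) :=
      fun c j => by rw [lp.coeFn_smul, Pi.smul_apply]
    have hs0 : (catalystVec φc : CatalystSpace H)
        ((0 : GuichardetIndex), (0 : GuichardetIndex)) = φc :=
      lp.single_apply_self _ _ _
    have hsne : ∀ j : GuichardetIndex × GuichardetIndex,
        j ≠ ((0 : GuichardetIndex), (0 : GuichardetIndex)) →
        (catalystVec φc : CatalystSpace H) j = 0 :=
      fun j hj => lp.single_apply_ne _ _ _ hj
    by_cases hst : s = 0 ∧ t = 0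
    · obtain ⟨rfl, rfl⟩ := hst
      have hXφ : (ket00 ((giEquiv (0 : GuichardetIndex)).1, (giEquiv (0 : GuichardetIndex)).1)
            • catalystVec φc : CatalystSpace H)
            ((giEquiv (0 : GuichardetIndex)).2, (giEquiv (0 : GuichardetIndex)).2) = φc := by
        rw [hsmul, giEquiv_zero]
        rw [hs0]
        norm_num [ket00, qubitTensor, ket0, EuclideanSpace.single_apply]
      have key : VA ((VB ((ket00 ((giEquiv (0 : GuichardetIndex)).1,
              (giEquiv (0 : GuichardetIndex)).1) • catalystVec φc : CatalystSpace H)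
              ((giEquiv (0 : GuichardetIndex)).2, (giEquiv (0 : GuichardetIndex)).2))) p.2) p.1
          = (ψ p • catalystVec φc : CatalystSpace H)
              ((0 : GuichardetIndex), (0 : GuichardetIndex)) := by
        rw [hXφ, hsmul, hs0]
        exact congrArg (fun z => z p) hVemb
      exact key
    · have hne : ((s, t) : GuichardetIndex × GuichardetIndex)
          ≠ ((0 : GuichardetIndex), (0 : GuichardetIndex)) :=
        fun h => hst ⟨congrArg Prod.fst h, congrArg Prod.snd h⟩
      have hX0 : (ket00 ((giEquiv s).1, (giEquiv t).1)
            • catalystVec φc : CatalystSpace H) ((giEquiv s).2, (giEquiv t).2) = 0 := by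
        rw [hsmul]
        by_cases hJ : ((giEquiv s).2, (giEquiv t).2)
            = ((0 : GuichardetIndex), (0 : GuichardetIndex))
        · have hnotboth : ¬((giEquiv s).1 = 0 ∧ (giEquiv t).1 = 0) := by
            rintro ⟨h1, h2⟩
            have j1 : (giEquiv s).2 = (0 : GuichardetIndex) := congrArg Prod.fst hJ
            have j2 : (giEquiv t).2 = (0 : GuichardetIndex) := congrArg Prod.snd hJ
            exact hst ⟨giEquiv_eq_zero_iff.mp (Prod.ext_iff.mpr ⟨h1, j1⟩),
              giEquiv_eq_zero_iff.mp (Prod.ext_iff.mpr ⟨h2, j2⟩)⟩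
          have hk : ket00 ((giEquiv s).1, (giEquiv t).1) = 0 := by
            rcases not_and_or.mp hnotboth with h | h <;>
              simp [ket00, qubitTensor, ket0, EuclideanSpace.single_apply, h]
          rw [hk, zero_smul]
        · rw [hsne _ hJ, smul_zero]
      have key : VA ((VB ((ket00 ((giEquiv s).1, (giEquiv t).1)
              • catalystVec φc : CatalystSpace H) ((giEquiv s).2, (giEquiv t).2))) p.2) p.1
          = (ψ p • catalystVec φc : CatalystSpace H) (s, t) := by
        rw [hX0, hsmul, hsne _ hne, smul_zero, map_zero]
        show VA ((0 : QTensor H) p.2) p.1 = 0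
        rw [show (0 : QTensor H) p.2 = 0 from rfl, map_zero]
        rfl
      exact key


end
end

section
/- A catalyst embezzling finitely many target states locally contains infinitely many copies of their combined tensor product (consequence of Proposition 4.1 together with Theorem 3.6, algebraic form). Let A and B be unital complex star algebras and s a unital linear functional on A ⊗ B. For each i = 0, …, n let C_i and D_i be unital complex star algebras, let g_i be a unital linear functional on C_i ⊗ D_i, and let Φ_{A,i} : A ⊗ C_i → A and Φ_{B,i} : B ⊗ D_i → B be star-algebra isomorphisms such that s ∘ (Φ_{A,i} ⊗ Φ_{B,i}) ∘ σ_i = s ⊗ g_i, where σ_i : A ⊗ B ⊗ C_i ⊗ D_i ≅ (A ⊗ C_i) ⊗ (B ⊗ D_i) is the canonical reordering isomorphism. Let g denote the unital linear functional on (C_0 ⊗ ⋯ ⊗ C_n) ⊗ (D_0 ⊗ ⋯ ⊗ D_n) obtained from g_0 ⊗ ⋯ ⊗ g_n by the canonical reordering. Then there exist sequences (π_A^(k))_{k≥1} of injective star-algebra homomorphisms C_0 ⊗ ⋯ ⊗ C_n → A and (π_B^(k))_{k≥1} of injective star-algebra homomorphisms D_0 ⊗ ⋯ ⊗ D_n →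 B such that for all k ≠ l the images of π_A^(k) and π_A^(l) commute elementwise, the images of π_B^(k) and π_B^(l) commute elementwise, and for every k and every P ∈ (C_0 ⊗ ⋯ ⊗ C_n) ⊗ (D_0 ⊗ ⋯ ⊗ D_n), s((π_A^(k) ⊗ π_B^(k))(P)) = g(P). -/
open TensorProduct

section StarTensor

variable {A B : Type*} [Ring A] [Ring B] [Algebra ℂ A] [Algebra ℂ B]
  [StarRing A] [StarRing B] [StarModule ℂ A] [StarModule ℂ B]

/-- The star operation on the algebraic tensor product, determined by
`(a ⊗ b)* = a* ⊗ b*`. -/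
noncomputable def tensorStar : A ⊗[ℂ] B →+ A ⊗[ℂ] B :=
  TensorProduct.liftAddHom
    { toFun := fun a =>
        { toFun := fun b => star a ⊗ₜ[ℂ] star b
          map_zero' := by simp
          map_add' := fun b b' => by simp [star_add, TensorProduct.tmul_add] }
      map_zero' := by ext b; simp
      map_add' := fun a a' => by ext b; simp [star_add, TensorProduct.add_tmul] }
    (fun c a b => by
      simp [star_smul, TensorProduct.smul_tmul', TensorProduct.tmul_smul])

@[simp] lemma tensorStar_tmul (a : A) (b : B) :
    tensorStar (a ⊗ₜ[ℂ] b) = star a ⊗ₜ[ℂ] star b := by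
  simp [tensorStar]

lemma tensorStar_involutive : ∀ x : A ⊗[ℂ] B, tensorStar (tensorStar x) = x := fun x => by
  induction x with
  | zero => simp
  | tmul a b => simp
  | add x y hx hy => simp only [map_add, hx, hy]

lemma tensorStar_mul : ∀ x y : A ⊗[ℂ] B, tensorStar (x * y) = tensorStar y * tensorStar x := by
  intro x y
  induction x with
  | zero => simp
  | tmul a b =>
      induction y with
      | zero => simp
      | tmul c d => simp [Algebra.TensorProduct.tmul_mul_tmul]
      | add y z hy hz => simp only [add_mul, mul_add, map_add, hy, hz]
  | add x x' hx hx' => simp only [add_mul, mul_add, map_add, hx, hx']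

noncomputable instance TensorProduct.instStarRing' : StarRing (A ⊗[ℂ] B) where
  star := tensorStar
  star_involutive := tensorStar_involutive
  star_mul := tensorStar_mul
  star_add := map_add tensorStar

noncomputable instance TensorProduct.instStarModule' : @StarModule ℂ (A ⊗[ℂ] B) _
    (@InvolutiveStar.toStar _ (@StarAddMonoid.toInvolutiveStar _ _
      (@StarRing.toStarAddMonoid _ _ TensorProduct.instStarRing'))) _ where
  star_smul := fun c x => by
    show tensorStar (c • x) = star c • tensorStar x
    induction x with
    | zero => simp
    | tmul a b => simp [TensorProduct.smul_tmul', star_smul]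
    | add x y hx hy => simp only [smul_add, map_add, hx, hy]

@[simp] lemma TensorProduct.star_tmul' (a : A) (b : B) :
    star (a ⊗ₜ[ℂ] b) = star a ⊗ₜ[ℂ] star b :=
  tensorStar_tmul a b

end StarTensor

/-- The tensor product `f ⊗ g` of two linear functionals, acting by
`(f ⊗ g)(a ⊗ b) = f a * g b`. -/
noncomputable def tensorFun {A B : Type*} [AddCommMonoid A] [AddCommMonoid B]
    [Module ℂ A] [Module ℂ B] (f : A →ₗ[ℂ] ℂ) (g : B →ₗ[ℂ] ℂ) :
    A ⊗[ℂ] B →ₗ[ℂ] ℂ :=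
  (TensorProduct.lid ℂ ℂ).toLinearMap ∘ₗ TensorProduct.map f g

@[simp] lemma tensorFun_tmul {A B : Type*} [AddCommMonoid A] [AddCommMonoid B]
    [Module ℂ A] [Module ℂ B] (f : A →ₗ[ℂ] ℂ) (g : B →ₗ[ℂ] ℂ) (a : A) (b : B) :
    tensorFun f g (a ⊗ₜ[ℂ] b) = f a * g b := by
  simp [tensorFun]

universe u v

/-- A bundled unital complex star algebra: an associative unital ℂ-algebra equipped with a
conjugate-linear involutive anti-automorphism `star`. -/
structure StarAlgCat : Type (u + 1) where
  /-- the underlying type -/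
  carrier : Type u
  [ring : Ring carrier]
  [algebra : Algebra ℂ carrier]
  [starRing : StarRing carrier]
  [starModule : StarModule ℂ carrier]

attribute [instance] StarAlgCat.ring StarAlgCat.algebra StarAlgCat.starRing StarAlgCat.starModule

/-- The tensor product of two bundled star algebras, with star given by
`(a ⊗ b)* = a* ⊗ b*`. -/
noncomputable def StarAlgCat.tens (X : StarAlgCat.{u}) (Y : StarAlgCat.{v}) :
    StarAlgCat.{max u v} :=
  StarAlgCat.mk (X.carrier ⊗[ℂ] Y.carrier)

/-- The iterated tensor product `C 0 ⊗ C 1 ⊗ ⋯ ⊗ C n` of a finite family of star algebras,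
associated to the left. -/
noncomputable def StarAlgCat.tpow : (n : ℕ) → (Fin (n + 1) → StarAlgCat.{u}) → StarAlgCat.{u}
  | 0, C => C 0
  | n + 1, C => (StarAlgCat.tpow n (fun i => C i.castSucc)).tens (C (Fin.last (n + 1)))

/-- The combined functional `g_0 ⊗ ⋯ ⊗ g_n`, viewed via the canonical reordering as a linear
functional on `(C_0 ⊗ ⋯ ⊗ C_n) ⊗ (D_0 ⊗ ⋯ ⊗ D_n)`; it sends (the reordering of)
`c_0 ⊗ d_0 ⊗ ⋯ ⊗ c_n ⊗ d_n` to `g_0 (c_0 ⊗ d_0) ⋯ g_n (c_n ⊗ d_n)`. -/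
noncomputable def funTens :
    (n : ℕ) → (C : Fin (n + 1) → StarAlgCat.{u}) → (D : Fin (n + 1) → StarAlgCat.{v}) →
    (∀ i, ((C i).carrier ⊗[ℂ] (D i).carrier) →ₗ[ℂ] ℂ) →
    (((StarAlgCat.tpow n C).carrier ⊗[ℂ] (StarAlgCat.tpow n D).carrier) →ₗ[ℂ] ℂ)
  | 0, _, _, g => g 0
  | n + 1, C, D, g =>
      (tensorFun (funTens n (fun i => C i.castSucc) (fun i => D i.castSucc)
          (fun i => g i.castSucc)) (g (Fin.last (n + 1)))) ∘ₗ
        (TensorProduct.tensorTensorTensorComm ℂ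
          (StarAlgCat.tpow n fun i => C i.castSucc).carrier (C (Fin.last (n + 1))).carrier
          (StarAlgCat.tpow n fun i => D i.castSucc).carrier
          (D (Fin.last (n + 1))).carrier).toLinearMap

section Aux

open scoped TensorProduct

lemma one_tmul_injective' {A T : Type*} [Ring A] [Ring T] [Algebra ℂ A] [Algebra ℂ T]
    [Nontrivial A] : Function.Injective (fun t : T => (1:A) ⊗ₜ[ℂ] t) := by
  have h : (fun t : T => (1:A) ⊗ₜ[ℂ] t)
      = (LinearMap.rTensor T (Algebra.linearMap ℂ A)) ∘ (TensorProduct.lid ℂ T).symm := by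
    funext t
    simp [TensorProduct.lid_symm_apply]
  rw [h]
  exact (Module.Flat.rTensor_preserves_injective_linearMap _
    (algebraMap ℂ A).injective).comp (TensorProduct.lid ℂ T).symm.injective

lemma tmul_one_injective' {A T : Type*} [Ring A] [Ring T] [Algebra ℂ A] [Algebra ℂ T]
    [Nontrivial T] : Function.Injective (fun a : A => a ⊗ₜ[ℂ] (1:T)) := by
  have h : (fun a : A => a ⊗ₜ[ℂ] (1:T))
      = (LinearMap.lTensor A (Algebra.linearMap ℂ T)) ∘ (TensorProduct.rid ℂ A).symm := by
    funext a
    simp [TensorProduct.rid_symm_apply]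
  rw [h]
  exact (Module.Flat.lTensor_preserves_injective_linearMap _
    (algebraMap ℂ T).injective).comp (TensorProduct.rid ℂ A).symm.injective

/-- `includeRight` as a star algebra homomorphism. -/
noncomputable def starIncludeRight (A T : StarAlgCat.{u}) :
    T.carrier →⋆ₐ[ℂ] (A.carrier ⊗[ℂ] T.carrier) :=
  { Algebra.TensorProduct.includeRight with
    map_star' := fun t => by simp }

/-- `includeLeft` as a star algebra homomorphism. -/
noncomputable def starIncludeLeft (A T : StarAlgCat.{u}) :
    A.carrier →⋆ₐ[ℂ] (A.carrier ⊗[ℂ] T.carrier) :=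
  { (Algebra.TensorProduct.includeLeft : A.carrier →ₐ[ℂ] A.carrier ⊗[ℂ] T.carrier) with
    map_star' := fun a => by simp }

/-- The sequence of homomorphisms `α^k ∘ β`. -/
noncomputable def piSeq {T A : Type u} [Ring T] [Ring A] [Algebra ℂ T] [Algebra ℂ A]
    [StarRing T] [StarRing A] [StarModule ℂ T] [StarModule ℂ A]
    (β : T →⋆ₐ[ℂ] A) (α : A →⋆ₐ[ℂ] A) : ℕ → (T →⋆ₐ[ℂ] A)
  | 0 => β
  | k+1 => α.comp (piSeq β α k)

end Aux

lemma key_lemma (A B T T' : StarAlgCat.{u})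
    (s : (A.carrier ⊗[ℂ] B.carrier) →ₗ[ℂ] ℂ) (hs : s 1 = 1)
    (gt : (T.carrier ⊗[ℂ] T'.carrier) →ₗ[ℂ] ℂ) (hgt : gt 1 = 1)
    (ΦA : (A.carrier ⊗[ℂ] T.carrier) ≃⋆ₐ[ℂ] A.carrier)
    (ΦB : (B.carrier ⊗[ℂ] T'.carrier) ≃⋆ₐ[ℂ] B.carrier)
    (hemb : ∀ X : (A.carrier ⊗[ℂ] B.carrier) ⊗[ℂ] (T.carrier ⊗[ℂ] T'.carrier),
      s (Algebra.TensorProduct.map (AlgHomClass.toAlgHom ΦA) (AlgHomClass.toAlgHom ΦB)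
          (Algebra.TensorProduct.tensorTensorTensorComm ℂ ℂ ℂ ℂ A.carrier B.carrier
            T.carrier T'.carrier X)) = tensorFun s gt X) :
    ∃ (πA : ℕ → (T.carrier →⋆ₐ[ℂ] A.carrier)) (πB : ℕ → (T'.carrier →⋆ₐ[ℂ] B.carrier)),
      (∀ k, Function.Injective (πA k)) ∧
      (∀ k, Function.Injective (πB k)) ∧
      (∀ k l, k ≠ l → ∀ x y, Commute (πA k x) (πA l y)) ∧
      (∀ k l, k ≠ l → ∀ x y, Commute (πB k x) (πB l y)) ∧
      (∀ k, ∀ P : T.carrier ⊗[ℂ] T'.carrier,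
        s (Algebra.TensorProduct.map (πA k).toAlgHom (πB k).toAlgHom P) = gt P) := by
  -- nontriviality
  haveI hAB : Nontrivial (A.carrier ⊗[ℂ] B.carrier) := by
    refine nontrivial_of_ne 1 0 fun h => one_ne_zero (α := ℂ) ?_
    rw [← hs, h, map_zero]
  haveI hTT : Nontrivial (T.carrier ⊗[ℂ] T'.carrier) := by
    refine nontrivial_of_ne 1 0 fun h => one_ne_zero (α := ℂ) ?_
    rw [← hgt, h, map_zero]
  haveI hA : Nontrivial A.carrier := by
    refine nontrivial_of_ne 1 0 fun h => one_ne_zero (α := A.carrier ⊗[ℂ] B.carrier) ?_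
    rw [Algebra.TensorProduct.one_def, h, TensorProduct.zero_tmul]
  haveI hB : Nontrivial B.carrier := by
    refine nontrivial_of_ne 1 0 fun h => one_ne_zero (α := A.carrier ⊗[ℂ] B.carrier) ?_
    rw [Algebra.TensorProduct.one_def, h, TensorProduct.tmul_zero]
  haveI hT : Nontrivial T.carrier := by
    refine nontrivial_of_ne 1 0 fun h => one_ne_zero (α := T.carrier ⊗[ℂ] T'.carrier) ?_
    rw [Algebra.TensorProduct.one_def, h, TensorProduct.zero_tmul]
  haveI hT' : Nontrivial T'.carrier := by
    refine nontrivial_of_ne 1 0 fun h => one_ne_zero (α := T.carrier ⊗[ℂ] T'.carrier) ?_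
    rw [Algebra.TensorProduct.one_def, h, TensorProduct.tmul_zero]
  -- the basic homomorphisms
  set βA : T.carrier →⋆ₐ[ℂ] A.carrier :=
    (StarAlgHomClass.toStarAlgHom ΦA).comp (starIncludeRight A T) with hβAdef
  set βB : T'.carrier →⋆ₐ[ℂ] B.carrier :=
    (StarAlgHomClass.toStarAlgHom ΦB).comp (starIncludeRight B T') with hβBdef
  set αA : A.carrier →⋆ₐ[ℂ] A.carrier :=
    (StarAlgHomClass.toStarAlgHom ΦA).comp (starIncludeLeft A T) with hαAdef
  set αB : B.carrier →⋆ₐ[ℂ] B.carrier :=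
    (StarAlgHomClass.toStarAlgHom ΦB).comp (starIncludeLeft B T') with hαBdef
  have hβA : Function.Injective βA := by
    have : ⇑βA = ⇑ΦA ∘ (fun t : T.carrier => (1:A.carrier) ⊗ₜ[ℂ] t) := rfl
    rw [this]; exact (EquivLike.injective ΦA).comp one_tmul_injective'
  have hβB : Function.Injective βB := by
    have : ⇑βB = ⇑ΦB ∘ (fun t : T'.carrier => (1:B.carrier) ⊗ₜ[ℂ] t) := rfl
    rw [this]; exact (EquivLike.injective ΦB).comp one_tmul_injective'
  have hαA : Function.Injective αA := by
    have : ⇑αA = ⇑ΦA ∘ (fun a : A.carrier => a ⊗ₜ[ℂ] (1:T.carrier)) := rfl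
    rw [this]; exact (EquivLike.injective ΦA).comp tmul_one_injective'
  have hαB : Function.Injective αB := by
    have : ⇑αB = ⇑ΦB ∘ (fun a : B.carrier => a ⊗ₜ[ℂ] (1:T'.carrier)) := rfl
    rw [this]; exact (EquivLike.injective ΦB).comp tmul_one_injective'
  refine ⟨piSeq βA αA, piSeq βB αB, ?_, ?_, ?_, ?_, ?_⟩
  · intro k; induction k with
    | zero => exact hβA
    | succ k ih => exact hαA.comp ih
  · intro k; induction k with
    | zero => exact hβB
    | succ k ih => exact hαB.comp ih
  · -- commuting images, A side
    have base : ∀ (t : T.carrier) (a : A.carrier), Commute (βA t) (αA a) := by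
      intro t a
      have h : Commute ((1:A.carrier) ⊗ₜ[ℂ] t) (a ⊗ₜ[ℂ] (1:T.carrier)) := by
        show _ = _
        simp [Algebra.TensorProduct.tmul_mul_tmul]
      exact h.map (StarAlgHomClass.toStarAlgHom ΦA)
    have hL : ∀ m k (x : T.carrier) (y : T.carrier),
        Commute (piSeq βA αA k x) (piSeq βA αA (k+m+1) y) := by
      intro m k
      induction k with
      | zero => intro x y; exact base x _
      | succ k ih =>
          intro x y
          have e : k+1+m+1 = (k+m+1)+1 := by omega
          rw [e]
          exact (ih x y).map αA
    intro k l hkl x y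
    rcases lt_or_gt_of_ne hkl with h | h
    · obtain ⟨m, rfl⟩ : ∃ m, l = k + m + 1 := ⟨l - k - 1, by omega⟩
      exact hL m k x y
    · obtain ⟨m, rfl⟩ : ∃ m, k = l + m + 1 := ⟨k - l - 1, by omega⟩
      exact (hL m l y x).symm
  · -- commuting images, B side
    have base : ∀ (t : T'.carrier) (a : B.carrier), Commute (βB t) (αB a) := by
      intro t a
      have h : Commute ((1:B.carrier) ⊗ₜ[ℂ] t) (a ⊗ₜ[ℂ] (1:T'.carrier)) := by
        show _ = _
        simp [Algebra.TensorProduct.tmul_mul_tmul]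
      exact h.map (StarAlgHomClass.toStarAlgHom ΦB)
    have hL : ∀ m k (x : T'.carrier) (y : T'.carrier),
        Commute (piSeq βB αB k x) (piSeq βB αB (k+m+1) y) := by
      intro m k
      induction k with
      | zero => intro x y; exact base x _
      | succ k ih =>
          intro x y
          have e : k+1+m+1 = (k+m+1)+1 := by omega
          rw [e]
          exact (ih x y).map αB
    intro k l hkl x y
    rcases lt_or_gt_of_ne hkl with h | h
    · obtain ⟨m, rfl⟩ : ∃ m, l = k + m + 1 := ⟨l - k - 1, by omega⟩
      exact hL m k x y
    · obtain ⟨m, rfl⟩ : ∃ m, k = l + m + 1 := ⟨k - l - 1, by omega⟩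
      exact (hL m l y x).symm
  · -- the functional condition
    have hαinv : ∀ x : A.carrier ⊗[ℂ] B.carrier,
        s (Algebra.TensorProduct.map αA.toAlgHom αB.toAlgHom x) = s x := by
      intro x
      induction x with
      | zero => simp
      | add x y hx hy => simp only [map_add, hx, hy]
      | tmul a b =>
          have h := hemb ((a ⊗ₜ[ℂ] b) ⊗ₜ[ℂ] ((1:T.carrier) ⊗ₜ[ℂ] (1:T'.carrier)))
          rw [Algebra.TensorProduct.tensorTensorTensorComm_tmul] at h
          simp only [Algebra.TensorProduct.map_tmul, tensorFun_tmul] at h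
          rw [show ((1:T.carrier) ⊗ₜ[ℂ] (1:T'.carrier)) = (1 : T.carrier ⊗[ℂ] T'.carrier) from rfl,
            hgt, mul_one] at h
          simp at h ⊢; exact h
    have hbase : ∀ P : T.carrier ⊗[ℂ] T'.carrier,
        s (Algebra.TensorProduct.map βA.toAlgHom βB.toAlgHom P) = gt P := by
      intro P
      induction P with
      | zero => simp
      | add x y hx hy => simp only [map_add, hx, hy]
      | tmul c d =>
          have h := hemb (((1:A.carrier) ⊗ₜ[ℂ] (1:B.carrier)) ⊗ₜ[ℂ] (c ⊗ₜ[ℂ] d))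
          rw [Algebra.TensorProduct.tensorTensorTensorComm_tmul] at h
          simp only [Algebra.TensorProduct.map_tmul, tensorFun_tmul] at h
          rw [show ((1:A.carrier) ⊗ₜ[ℂ] (1:B.carrier)) = (1 : A.carrier ⊗[ℂ] B.carrier) from rfl,
            hs, one_mul] at h
          simp at h ⊢; exact h
    intro k
    induction k with
    | zero => exact hbase
    | succ k ih =>
        intro P
        have hcomp : Algebra.TensorProduct.map (piSeq βA αA (k+1)).toAlgHom
              (piSeq βB αB (k+1)).toAlgHom
            = (Algebra.TensorProduct.map αA.toAlgHom αB.toAlgHom).comp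
              (Algebra.TensorProduct.map (piSeq βA αA k).toAlgHom (piSeq βB αB k).toAlgHom) := by
          rw [← Algebra.TensorProduct.map_comp]; rfl
        rw [hcomp, AlgHom.comp_apply, hαinv, ih]

/-- Upgrade an `AlgEquiv` commuting with `star` to a `StarAlgEquiv`. -/
def ofAlgEquivStar {X Y : Type u} [Ring X] [Ring Y] [Algebra ℂ X] [Algebra ℂ Y]
    [StarRing X] [StarRing Y] [StarModule ℂ X] [StarModule ℂ Y]
    (e : X ≃ₐ[ℂ] Y) (h : ∀ x, e (star x) = star (e x)) : X ≃⋆ₐ[ℂ] Y :=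
  { e.toRingEquiv with
    map_star' := h
    map_smul' := fun r a => map_smul e r a }

@[simp] lemma ofAlgEquivStar_apply {X Y : Type u} [Ring X] [Ring Y] [Algebra ℂ X] [Algebra ℂ Y]
    [StarRing X] [StarRing Y] [StarModule ℂ X] [StarModule ℂ Y]
    (e : X ≃ₐ[ℂ] Y) (h : ∀ x, e (star x) = star (e x)) (x : X) :
    ofAlgEquivStar e h x = e x := rfl

@[simp] lemma toAlgEquiv_starAlgEquiv_apply {X Y : Type u} [Ring X] [Ring Y]
    [Algebra ℂ X] [Algebra ℂ Y] [StarRing X] [StarRing Y] [StarModule ℂ X] [StarModule ℂ Y]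
    (e : X ≃⋆ₐ[ℂ] Y) (x : X) :
    (AlgEquivClass.toAlgEquiv e : X ≃ₐ[ℂ] Y) x = e x := rfl

@[simp] lemma toAlgHom_starAlgEquiv_apply {X Y : Type u} [Ring X] [Ring Y]
    [Algebra ℂ X] [Algebra ℂ Y] [StarRing X] [StarRing Y] [StarModule ℂ X] [StarModule ℂ Y]
    (e : X ≃⋆ₐ[ℂ] Y) (x : X) :
    (AlgHomClass.toAlgHom e : X →ₐ[ℂ] Y) x = e x := rfl

set_option maxHeartbeats 2000000 in
lemma funTens_one : ∀ (n : ℕ) (C : Fin (n + 1) → StarAlgCat.{u})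
    (D : Fin (n + 1) → StarAlgCat.{v})
    (g : ∀ i, ((C i).carrier ⊗[ℂ] (D i).carrier) →ₗ[ℂ] ℂ), (∀ i, g i 1 = 1) →
    funTens n C D g 1 = 1
  | 0, C, D, g, hg => hg 0
  | n + 1, C, D, g, hg => by
      have ih := funTens_one n (fun i => C i.castSucc) (fun i => D i.castSucc)
        (fun i => g i.castSucc) (fun i => hg i.castSucc)
      have e1 : funTens (n+1) C D g 1
          = funTens n (fun i => C i.castSucc) (fun i => D i.castSucc) (fun i => g i.castSucc) 1
            * g (Fin.last (n+1)) 1 := rfl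
      rw [e1, ih, hg (Fin.last (n+1)), mul_one]

set_option maxHeartbeats 4000000 in
set_option synthInstance.maxHeartbeats 1000000 in
lemma combine (A B : StarAlgCat.{u})
    (s : (A.carrier ⊗[ℂ] B.carrier) →ₗ[ℂ] ℂ) :
    ∀ (n : ℕ) (C D : Fin (n + 1) → StarAlgCat.{u})
    (g : ∀ i, ((C i).carrier ⊗[ℂ] (D i).carrier) →ₗ[ℂ] ℂ)
    (ΦA : ∀ i, (A.carrier ⊗[ℂ] (C i).carrier) ≃⋆ₐ[ℂ] A.carrier)
    (ΦB : ∀ i, (B.carrier ⊗[ℂ] (D i).carrier) ≃⋆ₐ[ℂ] B.carrier)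
    (_hemb : ∀ i, ∀ X : (A.carrier ⊗[ℂ] B.carrier) ⊗[ℂ] ((C i).carrier ⊗[ℂ] (D i).carrier),
      s (Algebra.TensorProduct.map (AlgHomClass.toAlgHom (ΦA i)) (AlgHomClass.toAlgHom (ΦB i))
          (Algebra.TensorProduct.tensorTensorTensorComm ℂ ℂ ℂ ℂ A.carrier B.carrier
            (C i).carrier (D i).carrier X)) = tensorFun s (g i) X),
    ∃ (ΨA : (A.carrier ⊗[ℂ] (StarAlgCat.tpow n C).carrier) ≃⋆ₐ[ℂ] A.carrier)
      (ΨB : (B.carrier ⊗[ℂ] (StarAlgCat.tpow n D).carrier) ≃⋆ₐ[ℂ] B.carrier),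
      ∀ X : (A.carrier ⊗[ℂ] B.carrier) ⊗[ℂ]
          ((StarAlgCat.tpow n C).carrier ⊗[ℂ] (StarAlgCat.tpow n D).carrier),
        s (Algebra.TensorProduct.map (AlgHomClass.toAlgHom ΨA) (AlgHomClass.toAlgHom ΨB)
            (Algebra.TensorProduct.tensorTensorTensorComm ℂ ℂ ℂ ℂ A.carrier B.carrier
              (StarAlgCat.tpow n C).carrier (StarAlgCat.tpow n D).carrier X))
          = tensorFun s (funTens n C D g) X
  | 0, C, D, g, ΦA, ΦB, hemb => ⟨ΦA 0, ΦB 0, hemb 0⟩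
  | n + 1, C, D, g, ΦA, ΦB, hemb => by
      obtain ⟨ΨA, ΨB, hΨ⟩ := combine A B s n (fun i => C i.castSucc) (fun i => D i.castSucc)
        (fun i => g i.castSucc) (fun i => ΦA i.castSucc) (fun i => ΦB i.castSucc)
        (fun i => hemb i.castSucc)
      set eA : (A.carrier ⊗[ℂ] ((StarAlgCat.tpow n fun i => C i.castSucc).carrier ⊗[ℂ] (C (Fin.last (n+1))).carrier)) ≃ₐ[ℂ] A.carrier :=
        ((Algebra.TensorProduct.assoc ℂ ℂ ℂ A.carrier (StarAlgCat.tpow n fun i => C i.castSucc).carrier (C (Fin.last (n+1))).carrier).symm.trans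
          (Algebra.TensorProduct.congr (AlgEquivClass.toAlgEquiv ΨA) AlgEquiv.refl)).trans
          (AlgEquivClass.toAlgEquiv (ΦA (Fin.last (n+1)))) with heA
      set eB : (B.carrier ⊗[ℂ] ((StarAlgCat.tpow n fun i => D i.castSucc).carrier ⊗[ℂ] (D (Fin.last (n+1))).carrier)) ≃ₐ[ℂ] B.carrier :=
        ((Algebra.TensorProduct.assoc ℂ ℂ ℂ B.carrier (StarAlgCat.tpow n fun i => D i.castSucc).carrier (D (Fin.last (n+1))).carrier).symm.trans
          (Algebra.TensorProduct.congr (AlgEquivClass.toAlgEquiv ΨB) AlgEquiv.refl)).trans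
          (AlgEquivClass.toAlgEquiv (ΦB (Fin.last (n+1)))) with heB
      have heA_apply : ∀ (a : A.carrier) (t : (StarAlgCat.tpow n fun i => C i.castSucc).carrier) (c : (C (Fin.last (n+1))).carrier),
          eA (a ⊗ₜ[ℂ] (t ⊗ₜ[ℂ] c))
            = ΦA (Fin.last (n+1)) (ΨA (a ⊗ₜ[ℂ] t) ⊗ₜ[ℂ] c) := by
        intro a t c
        simp only [heA, AlgEquiv.trans_apply, Algebra.TensorProduct.assoc_symm_tmul,
          Algebra.TensorProduct.congr_apply, Algebra.TensorProduct.map_tmul,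
          AlgEquiv.coe_refl, id_eq, AlgHom.coe_coe, toAlgEquiv_starAlgEquiv_apply]
        rfl
      have heB_apply : ∀ (b : B.carrier) (t : (StarAlgCat.tpow n fun i => D i.castSucc).carrier) (d : (D (Fin.last (n+1))).carrier),
          eB (b ⊗ₜ[ℂ] (t ⊗ₜ[ℂ] d))
            = ΦB (Fin.last (n+1)) (ΨB (b ⊗ₜ[ℂ] t) ⊗ₜ[ℂ] d) := by
        intro b t d
        simp only [heB, AlgEquiv.trans_apply, Algebra.TensorProduct.assoc_symm_tmul,
          Algebra.TensorProduct.congr_apply, Algebra.TensorProduct.map_tmul,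
          AlgEquiv.coe_refl, id_eq, AlgHom.coe_coe, toAlgEquiv_starAlgEquiv_apply]
        rfl
      have heAstar : ∀ x, eA (star x) = star (eA x) := by
        intro x
        induction x with
        | zero => simp
        | add x y hx hy => rw [star_add, map_add, hx, hy, map_add, star_add]
        | tmul a p =>
            induction p with
            | zero => simp [TensorProduct.tmul_zero]
            | add p q hp hq =>
                rw [TensorProduct.tmul_add, star_add, map_add, hp, hq, map_add, star_add]
            | tmul t c =>
                show eA (star (a ⊗ₜ[ℂ] (t ⊗ₜ[ℂ] c))) = star (eA (a ⊗ₜ[ℂ] (t ⊗ₜ[ℂ] c)))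
                simp only [TensorProduct.star_tmul, TensorProduct.star_tmul']
                rw [heA_apply, heA_apply, ← map_star (ΦA (Fin.last (n+1)))]
                simp only [TensorProduct.star_tmul, TensorProduct.star_tmul']
                rw [← map_star ΨA]
                simp only [TensorProduct.star_tmul, TensorProduct.star_tmul']
      have heBstar : ∀ x, eB (star x) = star (eB x) := by
        intro x
        induction x with
        | zero => simp
        | add x y hx hy => rw [star_add, map_add, hx, hy, map_add, star_add]
        | tmul a p =>
            induction p with
            | zero => simp [TensorProduct.tmul_zero]
            | add p q hp hq =>
                rw [TensorProduct.tmul_add, star_add, map_add, hp, hq, map_add, star_add]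
            | tmul t c =>
                show eB (star (a ⊗ₜ[ℂ] (t ⊗ₜ[ℂ] c))) = star (eB (a ⊗ₜ[ℂ] (t ⊗ₜ[ℂ] c)))
                simp only [TensorProduct.star_tmul, TensorProduct.star_tmul']
                rw [heB_apply, heB_apply, ← map_star (ΦB (Fin.last (n+1)))]
                simp only [TensorProduct.star_tmul, TensorProduct.star_tmul']
                rw [← map_star ΨB]
                simp only [TensorProduct.star_tmul, TensorProduct.star_tmul']
      refine ⟨@ofAlgEquivStar _ _ _ _ _ _ TensorProduct.instStarRing _ TensorProduct.instStarModule _ eA heAstar,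
        @ofAlgEquivStar _ _ _ _ _ _ TensorProduct.instStarRing _ TensorProduct.instStarModule _ eB heBstar, ?_⟩
      have hfun : ∀ (t : (StarAlgCat.tpow n fun i => C i.castSucc).carrier) (c : (C (Fin.last (n+1))).carrier) (t' : (StarAlgCat.tpow n fun i => D i.castSucc).carrier) (d : (D (Fin.last (n+1))).carrier),
          funTens (n+1) C D g ((t ⊗ₜ[ℂ] c) ⊗ₜ[ℂ] (t' ⊗ₜ[ℂ] d))
            = funTens n (fun i => C i.castSucc) (fun i => D i.castSucc)
                (fun i => g i.castSucc) (t ⊗ₜ[ℂ] t')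
              * g (Fin.last (n+1)) (c ⊗ₜ[ℂ] d) := fun t c t' d => rfl
      show ∀ X : (A.carrier ⊗[ℂ] B.carrier) ⊗[ℂ]
          (((StarAlgCat.tpow n fun i => C i.castSucc).carrier ⊗[ℂ] (C (Fin.last (n+1))).carrier) ⊗[ℂ] ((StarAlgCat.tpow n fun i => D i.castSucc).carrier ⊗[ℂ] (D (Fin.last (n+1))).carrier)),
        s (Algebra.TensorProduct.map (AlgHomClass.toAlgHom (@ofAlgEquivStar _ _ _ _ _ _ TensorProduct.instStarRing _ TensorProduct.instStarModule _ eA heAstar))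
            (AlgHomClass.toAlgHom (@ofAlgEquivStar _ _ _ _ _ _ TensorProduct.instStarRing _ TensorProduct.instStarModule _ eB heBstar))
            (Algebra.TensorProduct.tensorTensorTensorComm ℂ ℂ ℂ ℂ A.carrier B.carrier
              ((StarAlgCat.tpow n fun i => C i.castSucc).carrier ⊗[ℂ] (C (Fin.last (n+1))).carrier) ((StarAlgCat.tpow n fun i => D i.castSucc).carrier ⊗[ℂ] (D (Fin.last (n+1))).carrier) X))
          = tensorFun s (funTens (n+1) C D g) X
      intro X
      induction X with
      | zero => simp; exact (map_zero _).symm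
      | add x y hx hy => simp only [map_add, hx, hy]; exact (map_add _ _ _).symm
      | tmul u v =>
          induction u with
          | zero => simp [TensorProduct.zero_tmul]; exact (map_zero _).symm
          | add u u' hu hu' =>
              simp only [TensorProduct.add_tmul, map_add, hu, hu']; exact (map_add _ _ _).symm
          | tmul a b =>
              induction v with
              | zero => simp [TensorProduct.tmul_zero]; exact (map_zero _).symm
              | add v v' hv hv' =>
                  simp only [TensorProduct.tmul_add, map_add, hv, hv']; exact (map_add _ _ _).symm
              | tmul P Q =>
                  induction P with
                  | zero => simp [TensorProduct.zero_tmul, TensorProduct.tmul_zero]; exact (map_zero _).symm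
                  | add P P' hP hP' =>
                      simp only [TensorProduct.add_tmul, TensorProduct.tmul_add, map_add, hP, hP']; exact (map_add _ _ _).symm
                  | tmul t c =>
                      induction Q with
                      | zero => simp [TensorProduct.tmul_zero]; exact (map_zero _).symm
                      | add Q Q' hQ hQ' =>
                          simp only [TensorProduct.tmul_add, map_add, hQ, hQ']; exact (map_add _ _ _).symm
                      | tmul t' d =>
                          have h1 := hemb (Fin.last (n+1))
                            ((ΨA (a ⊗ₜ[ℂ] t) ⊗ₜ[ℂ] ΨB (b ⊗ₜ[ℂ] t')) ⊗ₜ[ℂ] (c ⊗ₜ[ℂ] d))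
                          have h2 := hΨ ((a ⊗ₜ[ℂ] b) ⊗ₜ[ℂ] (t ⊗ₜ[ℂ] t'))
                          rw [Algebra.TensorProduct.tensorTensorTensorComm_tmul] at h1 h2 ⊢
                          simp only [Algebra.TensorProduct.map_tmul, tensorFun_tmul,
                            AlgHom.coe_coe, toAlgHom_starAlgEquiv_apply,
                            ofAlgEquivStar_apply] at h1 h2 ⊢
                          change s (eA (a ⊗ₜ[ℂ] (t ⊗ₜ[ℂ] c)) ⊗ₜ[ℂ] eB (b ⊗ₜ[ℂ] (t' ⊗ₜ[ℂ] d))) = _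
                          rw [heA_apply, heB_apply, h1, h2, mul_assoc, ← hfun]
                          rfl


/-- **A catalyst embezzling finitely many target states locally contains infinitely many copies
of their combined tensor product** (Proposition 4.1 together with Theorem 3.6, algebraic form).
If `s` on `A ⊗ B` can exactly embezzle each `g_i` (`i = 0, …, n`), then there are sequences of
injective star-algebra homomorphisms `π_A^(k) : C_0 ⊗ ⋯ ⊗ C_n → A` and
`π_B^(k) : D_0 ⊗ ⋯ ⊗ D_n → B` with pairwise commuting images such that
`s ∘ (π_A^(k) ⊗ π_B^(k)) = g` for every `k`, where `g` is the canonical reordering of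
`g_0 ⊗ ⋯ ⊗ g_n`. -/
theorem embezzlement_finite_family_containment (A : StarAlgCat.{u}) (B : StarAlgCat.{u})
    (s : (A.carrier ⊗[ℂ] B.carrier) →ₗ[ℂ] ℂ) (hs : s 1 = 1)
    (n : ℕ) (C D : Fin (n + 1) → StarAlgCat.{u})
    (g : ∀ i, ((C i).carrier ⊗[ℂ] (D i).carrier) →ₗ[ℂ] ℂ)
    (hg : ∀ i, g i 1 = 1)
    (ΦA : ∀ i, (A.carrier ⊗[ℂ] (C i).carrier) ≃⋆ₐ[ℂ] A.carrier)
    (ΦB : ∀ i, (B.carrier ⊗[ℂ] (D i).carrier) ≃⋆ₐ[ℂ] B.carrier)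
    (hemb : ∀ i, ∀ X : (A.carrier ⊗[ℂ] B.carrier) ⊗[ℂ] ((C i).carrier ⊗[ℂ] (D i).carrier),
      s (Algebra.TensorProduct.map (AlgHomClass.toAlgHom (ΦA i)) (AlgHomClass.toAlgHom (ΦB i))
          (Algebra.TensorProduct.tensorTensorTensorComm ℂ ℂ ℂ ℂ A.carrier B.carrier
            (C i).carrier (D i).carrier X)) = tensorFun s (g i) X) :
    ∃ (πA : ℕ → ((StarAlgCat.tpow n C).carrier →⋆ₐ[ℂ] A.carrier))
      (πB : ℕ → ((StarAlgCat.tpow n D).carrier →⋆ₐ[ℂ] B.carrier)),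
      (∀ k, Function.Injective (πA k)) ∧
      (∀ k, Function.Injective (πB k)) ∧
      (∀ k l, k ≠ l → ∀ x y, Commute (πA k x) (πA l y)) ∧
      (∀ k l, k ≠ l → ∀ x y, Commute (πB k x) (πB l y)) ∧
      (∀ k, ∀ P : (StarAlgCat.tpow n C).carrier ⊗[ℂ] (StarAlgCat.tpow n D).carrier,
        s (Algebra.TensorProduct.map (πA k).toAlgHom (πB k).toAlgHom P)
          = funTens n C D g P) := by
  obtain ⟨ΨA, ΨB, hΨ⟩ := combine A B s n C D g ΦA ΦB hemb
  exact key_lemma A B (StarAlgCat.tpow n C) (StarAlgCat.tpow n D) s hs (funTens n C D g)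
    (funTens_one n C D g hg) ΨA ΨB hΨ
end
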